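/- For every integer s ≥ 2 there exist real constants h_{1,s},…,h_{⌊s/2⌋,s} (independent of n and p) such that for every positive integer n and every p ≥ 0, with p̂ = X/n and X ~ Poisson(np): E(p̂ − p)^s = n^{−s}·Σ_{j=1}^{⌊s/2⌋} h_{j,s}·(np)^j, and moreover |h_{j,s}| ≤ 2^j·j^s/j! ≤ (2e^{e/(e−1)})^s·(s/ln s)^s for every 1 ≤ j ≤ ⌊s/2⌋. Consequently, there exists a constant C_s > 0 depending only on s such that E|p̂ − p|^s ≤ C_s·( (np)^{s/2} ∨ (np) )/n^s. -/

import Mathlib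

/-!
For `X ~ Poisson(λ)` the Stein–Chen identity `E[X f(X)] = λ E[f(X + 1)]`, applied to
`f(x) = (x - λ)^s` and expanded binomially, gives `μ_{s+1} = λ ∑_{i<s} C(s,i) μ_i` for the central
moments `μ_s = E(X - λ)^s`. Hence `μ_s` is a polynomial in `λ` with coefficients `a(s,j)` obeying a
Stirling-type recursion; only `λ^1, …, λ^{⌊s/2⌋}` occur, and `j! a(s,j) ≤ j^s`. The bound
`j^s / j! ≤ (s / log s)^s` comes from `u^s ≤ e^{s(u-1)}` at `u = j log s / s` together with
`s^j / j! ≤ e^s`.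

For even `s` the absolute moment is `μ_s`; for odd `s = 2t + 1` the inequality
`|y| ≤ c/2 + y²/(2c)` interpolates between `μ_{2t}` and `μ_{2t+2}`, with `c = 1` when `λ ≤ 1` and
`c = √λ` when `λ ≥ 1`. Finally `p̂ - p = (X - np)/n`.
-/

open scoped BigOperators

/-- The Poisson(lam) probability mass function on the nonnegative integers. -/
noncomputable def poissonPMF (lam : ℝ) (k : ℕ) : ℝ :=
  Real.exp (-lam) * lam ^ k / (Nat.factorial k)

/-- Expectation of `f` under the Poisson(lam) distribution. -/
noncomputable def poissonE (lam : ℝ) (f : ℕ → ℝ) : ℝ :=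
  ∑' k : ℕ, poissonPMF lam k * f k

open Finset Real
open scoped Nat

/-- `centralMomentCoeff s j` counts the partitions of an `s`-set into `j` blocks of size at least
two (associated Stirling numbers of the second kind); the recursion classifies by the block of the
last element. -/
def centralMomentCoeff : ℕ → ℕ → ℕ
  | 0, 0 => 1
  | 0, _ + 1 => 0
  | _ + 1, 0 => 0
  | s + 1, j + 1 => ∑ i : Fin s, s.choose i * centralMomentCoeff i j

@[simp] lemma centralMomentCoeff_zero_zero : centralMomentCoeff 0 0 = 1 := by
  rw [centralMomentCoeff]

@[simp] lemma centralMomentCoeff_succ_zero (s : ℕ) : centralMomentCoeff (s + 1) 0 = 0 := by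
  rw [centralMomentCoeff]

lemma centralMomentCoeff_succ_succ (s j : ℕ) :
    centralMomentCoeff (s + 1) (j + 1) = ∑ i ∈ range s, s.choose i * centralMomentCoeff i j := by
  rw [centralMomentCoeff, Fin.sum_univ_eq_sum_range (fun i => s.choose i * centralMomentCoeff i j)]

lemma centralMomentCoeff_eq_zero_of_lt {s j : ℕ} (h : s < 2 * j) : centralMomentCoeff s j = 0 := by
  induction s using Nat.strong_induction_on generalizing j with
  | _ s ih =>
    match s, j with
    | 0, 0 => omega
    | 0, j + 1 => rw [centralMomentCoeff]
    | s + 1, 0 => omega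
    | s + 1, j + 1 =>
      rw [centralMomentCoeff_succ_succ]
      refine sum_eq_zero fun i hi => ?_
      rw [ih i (by simp at hi; omega) (by simp at hi; omega), mul_zero]

lemma factorial_mul_centralMomentCoeff_le (s j : ℕ) : j ! * centralMomentCoeff s j ≤ j ^ s := by
  induction s using Nat.strong_induction_on generalizing j with
  | _ s ih =>
    match s, j with
    | 0, 0 => simp
    | 0, j + 1 => simp [centralMomentCoeff]
    | s + 1, 0 => simp
    | s + 1, j + 1 =>
      calc (j + 1)! * centralMomentCoeff (s + 1) (j + 1)
          = (j + 1) * ∑ i ∈ range s, s.choose i * (j ! * centralMomentCoeff i j) := by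
            rw [centralMomentCoeff_succ_succ, Nat.factorial_succ, mul_assoc, mul_sum]
            congr 1
            exact sum_congr rfl fun i _ => by ring
        _ ≤ (j + 1) * ∑ i ∈ range s, s.choose i * j ^ i := by
            gcongr with i hi
            exact ih i (by simp at hi; omega) j
        _ ≤ (j + 1) * ∑ i ∈ range (s + 1), s.choose i * j ^ i := by
            gcongr
            omega
        _ = (j + 1) ^ (s + 1) := by
            rw [_root_.pow_succ', add_pow]
            simp only [one_pow, mul_one, mul_comm, Nat.cast_id]

lemma centralMomentCoeff_le_pow_div_factorial (s j : ℕ) :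
    (centralMomentCoeff s j : ℝ) ≤ j ^ s / j ! := by
  rw [le_div_iff₀ (by positivity), mul_comm]
  exact_mod_cast factorial_mul_centralMomentCoeff_le s j

lemma pow_div_factorial_le_div_log_pow {s : ℕ} (hs : 2 ≤ s) (j : ℕ) :
    (j : ℝ) ^ s / j ! ≤ (s / log s) ^ s := by
  have hs0 : (0 : ℝ) < s := by positivity
  have hL : 0 < log s := log_pos (by exact_mod_cast hs)
  set u : ℝ := j * log s / s
  have hsu : (s : ℝ) * u = j * log s := by simp only [u]; field_simp
  have hu : u ^ s ≤ exp (s * (u - 1)) := by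
    rw [exp_nat_mul]
    exact pow_le_pow_left₀ (by positivity) (by linarith [add_one_le_exp (u - 1)]) s
  have hexp : exp (s * (u - 1)) = exp (-s) * s ^ j := by
    rw [show (s : ℝ) * (u - 1) = -s + j * log s by rw [mul_sub, hsu]; ring, exp_add, exp_nat_mul,
      exp_log hs0]
  calc (j : ℝ) ^ s / j ! = (s / log s) ^ s * u ^ s / j ! := by
        rw [← mul_pow, div_mul_eq_mul_div, hsu, mul_div_cancel_right₀ _ hL.ne']
    _ ≤ (s / log s) ^ s * exp (s * (u - 1)) / j ! := by gcongr
    _ = (s / log s) ^ s * exp (-s) * ((s : ℝ) ^ j / j !) := by rw [hexp]; ring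
    _ ≤ (s / log s) ^ s * exp (-s) * exp s := by gcongr; exact pow_div_factorial_le_exp _ hs0.le j
    _ = (s / log s) ^ s := by rw [mul_assoc, ← exp_add]; simp

lemma two_pow_mul_pow_div_factorial_le {s j : ℕ} (hs : 2 ≤ s) (hj : j ≤ s) :
    2 ^ j * (j : ℝ) ^ s / j ! ≤ (2 * exp (exp 1 / (exp 1 - 1))) ^ s * (s / log s) ^ s := by
  have hE : 1 ≤ exp (exp 1 / (exp 1 - 1)) :=
    one_le_exp (div_nonneg (exp_pos 1).le (by linarith [add_one_le_exp 1]))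
  have h2 : (2 : ℝ) ^ j ≤ (2 * exp (exp 1 / (exp 1 - 1))) ^ s :=
    (pow_le_pow_right₀ one_le_two hj).trans (pow_le_pow_left₀ zero_le_two (by linarith) s)
  rw [mul_div_assoc]
  exact mul_le_mul h2 (pow_div_factorial_le_div_log_pow hs j) (by positivity) (by positivity)

lemma poissonPMF_nonneg {lam : ℝ} (hlam : 0 ≤ lam) (k : ℕ) : 0 ≤ poissonPMF lam k := by
  unfold poissonPMF; positivity

lemma hasSum_poissonPMF (lam : ℝ) : HasSum (poissonPMF lam) 1 := by
  have h := (NormedSpace.expSeries_div_hasSum_exp lam).mul_left (exp (-lam))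
  rw [← exp_eq_exp_ℝ, ← exp_add, neg_add_cancel, exp_zero] at h
  rwa [show poissonPMF lam = fun k => exp (-lam) * (lam ^ k / k !) from
    funext fun k => mul_div_assoc _ _ _]

lemma poissonPMF_succ_mul (lam : ℝ) (k : ℕ) :
    poissonPMF lam (k + 1) * (k + 1) = lam * poissonPMF lam k := by
  simp only [poissonPMF, Nat.factorial_succ]
  push_cast
  field_simp
  ring

lemma HasSum.poissonPMF_mul_natCast_mul {lam a : ℝ} {f : ℕ → ℝ}
    (h : HasSum (fun k => poissonPMF lam k * f (k + 1)) a) :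
    HasSum (fun k => poissonPMF lam k * (k * f k)) (lam * a) := by
  rw [← hasSum_nat_add_iff' 1]
  simp only [range_one, sum_singleton, Nat.cast_zero, zero_mul, mul_zero, sub_zero,
    Nat.cast_add, Nat.cast_one]
  have hshift : (fun k : ℕ => poissonPMF lam (k + 1) * ((k + 1) * f (k + 1))) =
      fun k => lam * (poissonPMF lam k * f (k + 1)) :=
    funext fun k => by rw [← mul_assoc, poissonPMF_succ_mul, mul_assoc]
  rw [hshift]
  exact h.mul_left lam

lemma poissonE_const_mul (lam c : ℝ) (f : ℕ → ℝ) :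
    poissonE lam (fun k => c * f k) = c * poissonE lam f := by
  simp only [poissonE, ← tsum_mul_left, mul_left_comm]

noncomputable def poissonCentralMoment (s : ℕ) (lam : ℝ) : ℝ :=
  ∑ j ∈ range (s + 1), (centralMomentCoeff s j : ℝ) * lam ^ j

lemma poissonCentralMoment_eq_sum_range_of_le {i s : ℕ} (h : i ≤ s) (lam : ℝ) :
    poissonCentralMoment i lam = ∑ j ∈ range (s + 1), (centralMomentCoeff i j : ℝ) * lam ^ j := by
  refine sum_subset (range_subset_range.mpr (by omega)) fun j _ hj => ?_
  rw [centralMomentCoeff_eq_zero_of_lt (by simp at hj; omega), Nat.cast_zero, zero_mul]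

lemma poissonCentralMoment_succ (s : ℕ) (lam : ℝ) :
    poissonCentralMoment (s + 1) lam =
      lam * ∑ i ∈ range s, (s.choose i : ℝ) * poissonCentralMoment i lam := by
  rw [poissonCentralMoment, sum_range_succ', centralMomentCoeff_succ_zero, Nat.cast_zero,
    zero_mul, add_zero, mul_sum]
  simp_rw [centralMomentCoeff_succ_succ, Nat.cast_sum, Nat.cast_mul, sum_mul]
  rw [sum_comm]
  refine sum_congr rfl fun i hi => ?_
  rw [poissonCentralMoment_eq_sum_range_of_le (s := s) (by simp at hi; omega), mul_sum, mul_sum]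
  exact sum_congr rfl fun j _ => by ring

lemma poissonCentralMoment_eq_sum_Icc {s : ℕ} (hs : 1 ≤ s) (lam : ℝ) :
    poissonCentralMoment s lam =
      ∑ j ∈ Icc 1 (s / 2), (centralMomentCoeff s j : ℝ) * lam ^ j := by
  refine (sum_subset (fun j hj => ?_) fun j _ hj => ?_).symm
  · simp only [mem_Icc, mem_range] at hj ⊢
    omega
  · obtain rfl | hj0 := Nat.eq_zero_or_pos j
    · obtain ⟨s, rfl⟩ := Nat.exists_eq_add_of_le' hs
      simp
    · rw [centralMomentCoeff_eq_zero_of_lt (by simp at hj; omega), Nat.cast_zero, zero_mul]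

theorem hasSum_poissonPMF_mul_sub_pow (lam : ℝ) (s : ℕ) :
    HasSum (fun k => poissonPMF lam k * ((k : ℝ) - lam) ^ s) (poissonCentralMoment s lam) := by
  induction s using Nat.strong_induction_on with
  | _ s ih =>
    match s with
    | 0 => simpa [poissonCentralMoment] using hasSum_poissonPMF lam
    | s + 1 =>
      have hbinom : (fun k => poissonPMF lam k * (((k + 1 : ℕ) : ℝ) - lam) ^ s) =
          fun k => ∑ i ∈ range (s + 1), (s.choose i : ℝ) * (poissonPMF lam k * ((k : ℝ) - lam) ^ i) :=
        funext fun k => by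
          rw [Nat.cast_succ, add_sub_right_comm, add_pow, mul_sum]
          exact sum_congr rfl fun i _ => by ring
      have hshift : HasSum (fun k => poissonPMF lam k * (((k + 1 : ℕ) : ℝ) - lam) ^ s)
          (∑ i ∈ range (s + 1), (s.choose i : ℝ) * poissonCentralMoment i lam) := by
        rw [hbinom]
        exact hasSum_sum fun i hi => (ih i (by simp at hi; omega)).mul_left _
      have hstep : (fun k => poissonPMF lam k * ((k : ℝ) - lam) ^ (s + 1)) =
          fun k => poissonPMF lam k * (k * ((k : ℝ) - lam) ^ s) -
            lam * (poissonPMF lam k * ((k : ℝ) - lam) ^ s) :=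
        funext fun k => by ring
      have h := (hshift.poissonPMF_mul_natCast_mul (f := fun k => ((k : ℝ) - lam) ^ s)).sub
        ((ih s (by omega)).mul_left lam)
      rw [sum_range_succ, Nat.choose_self, Nat.cast_one, one_mul, mul_add,
        add_sub_cancel_right] at h
      rwa [hstep, poissonCentralMoment_succ]

lemma poissonCentralMoment_nonneg (s : ℕ) {lam : ℝ} (hlam : 0 ≤ lam) :
    0 ≤ poissonCentralMoment s lam := by
  unfold poissonCentralMoment; positivity

lemma poissonCentralMoment_le_of_le_one {s : ℕ} (hs : 1 ≤ s) {lam : ℝ} (h0 : 0 ≤ lam)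
    (h1 : lam ≤ 1) : poissonCentralMoment s lam ≤ poissonCentralMoment s 1 * lam := by
  rw [poissonCentralMoment_eq_sum_Icc hs, poissonCentralMoment_eq_sum_Icc hs, sum_mul]
  refine sum_le_sum fun j hj => ?_
  rw [one_pow, mul_one]
  gcongr
  exact pow_le_of_le_one h0 h1 (by simp at hj; omega)

lemma poissonCentralMoment_le_of_one_le {s : ℕ} (hs : 1 ≤ s) {lam : ℝ} (h1 : 1 ≤ lam) :
    poissonCentralMoment s lam ≤ poissonCentralMoment s 1 * lam ^ (s / 2) := by
  rw [poissonCentralMoment_eq_sum_Icc hs, poissonCentralMoment_eq_sum_Icc hs, sum_mul]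
  refine sum_le_sum fun j hj => ?_
  rw [one_pow, mul_one]
  gcongr
  exact (mem_Icc.mp hj).2

lemma poissonE_abs_sub_pow_two_mul (lam : ℝ) (t : ℕ) :
    poissonE lam (fun k => |(k : ℝ) - lam| ^ (2 * t)) = poissonCentralMoment (2 * t) lam := by
  simp only [poissonE, (even_two_mul t).pow_abs]
  exact (hasSum_poissonPMF_mul_sub_pow lam _).tsum_eq

lemma poissonE_abs_sub_pow_two_mul_le {t : ℕ} (ht : 1 ≤ t) {lam : ℝ} (hlam : 0 ≤ lam) :
    poissonE lam (fun k => |(k : ℝ) - lam| ^ (2 * t)) ≤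
      poissonCentralMoment (2 * t) 1 * max (√lam ^ (2 * t)) lam := by
  have hμ := poissonCentralMoment_nonneg (2 * t) zero_le_one
  rw [poissonE_abs_sub_pow_two_mul]
  rcases le_total lam 1 with h1 | h1
  · exact (poissonCentralMoment_le_of_le_one (by omega) hlam h1).trans
      (mul_le_mul_of_nonneg_left (le_max_right _ _) hμ)
  · refine (poissonCentralMoment_le_of_one_le (by omega) h1).trans
      (mul_le_mul_of_nonneg_left ?_ hμ)
    rw [pow_mul, sq_sqrt hlam, Nat.mul_div_cancel_left t two_pos]
    exact le_max_left _ _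

lemma abs_pow_two_mul_add_one_le {c : ℝ} (hc : 0 < c) (y : ℝ) (t : ℕ) :
    |y| ^ (2 * t + 1) ≤ c / 2 * y ^ (2 * t) + c⁻¹ / 2 * y ^ (2 * t + 2) := by
  have hamgm : |y| ≤ c / 2 + c⁻¹ / 2 * y ^ 2 := by
    have := two_mul_le_add_sq c |y|
    rw [sq_abs] at this
    rw [show c / 2 + c⁻¹ / 2 * y ^ 2 = (c ^ 2 + y ^ 2) / (2 * c) by field_simp,
      le_div_iff₀ (by positivity)]
    linarith
  calc |y| ^ (2 * t + 1) = y ^ (2 * t) * |y| := by rw [pow_succ, (even_two_mul t).pow_abs]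
    _ ≤ y ^ (2 * t) * (c / 2 + c⁻¹ / 2 * y ^ 2) :=
        mul_le_mul_of_nonneg_left hamgm ((even_two_mul t).pow_nonneg y)
    _ = c / 2 * y ^ (2 * t) + c⁻¹ / 2 * y ^ (2 * t + 2) := by ring

lemma poissonE_abs_sub_pow_two_mul_add_one_le_of_pos {lam c : ℝ} (hlam : 0 ≤ lam) (hc : 0 < c)
    (t : ℕ) :
    poissonE lam (fun k => |(k : ℝ) - lam| ^ (2 * t + 1)) ≤
      c / 2 * poissonCentralMoment (2 * t) lam + c⁻¹ / 2 * poissonCentralMoment (2 * t + 2) lam := by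
  have hg := ((hasSum_poissonPMF_mul_sub_pow lam (2 * t)).mul_left (c / 2)).add
    ((hasSum_poissonPMF_mul_sub_pow lam (2 * t + 2)).mul_left (c⁻¹ / 2))
  have hle : ∀ k : ℕ, poissonPMF lam k * |(k : ℝ) - lam| ^ (2 * t + 1) ≤
      c / 2 * (poissonPMF lam k * ((k : ℝ) - lam) ^ (2 * t)) +
        c⁻¹ / 2 * (poissonPMF lam k * ((k : ℝ) - lam) ^ (2 * t + 2)) := fun k => by
    have := mul_le_mul_of_nonneg_left (abs_pow_two_mul_add_one_le hc ((k : ℝ) - lam) t)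
      (poissonPMF_nonneg hlam k)
    linarith
  have hsum : Summable fun k => poissonPMF lam k * |(k : ℝ) - lam| ^ (2 * t + 1) :=
    Summable.of_nonneg_of_le (fun k => by have := poissonPMF_nonneg hlam k; positivity) hle
      hg.summable
  exact hasSum_le hle hsum.hasSum hg

lemma poissonE_abs_sub_pow_two_mul_add_one_le {t : ℕ} (ht : 1 ≤ t) {lam : ℝ} (hlam : 0 ≤ lam) :
    poissonE lam (fun k => |(k : ℝ) - lam| ^ (2 * t + 1)) ≤
      (poissonCentralMoment (2 * t) 1 + poissonCentralMoment (2 * t + 2) 1) / 2 *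
        max (√lam ^ (2 * t + 1)) lam := by
  have hμ := poissonCentralMoment_nonneg (2 * t) zero_le_one
  have hμ' := poissonCentralMoment_nonneg (2 * t + 2) zero_le_one
  rcases le_total lam 1 with h1 | h1
  · have h := poissonE_abs_sub_pow_two_mul_add_one_le_of_pos hlam one_pos t
    have h2 := poissonCentralMoment_le_of_le_one (s := 2 * t) (by omega) hlam h1
    have h3 := poissonCentralMoment_le_of_le_one (s := 2 * t + 2) (by omega) hlam h1
    have h4 := mul_le_mul_of_nonneg_left (le_max_right (√lam ^ (2 * t + 1)) lam)
      (add_nonneg hμ hμ')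
    simp only [inv_one] at h
    linarith
  · have hx : 0 < √lam := sqrt_pos.mpr (by linarith)
    have h := poissonE_abs_sub_pow_two_mul_add_one_le_of_pos hlam hx t
    have h2 := poissonCentralMoment_le_of_one_le (s := 2 * t) (by omega) h1
    have h3 := poissonCentralMoment_le_of_one_le (s := 2 * t + 2) (by omega) h1
    rw [Nat.mul_div_cancel_left t two_pos] at h2
    rw [show (2 * t + 2) / 2 = t + 1 by omega] at h3
    have hbal : √lam / 2 * (poissonCentralMoment (2 * t) 1 * lam ^ t) +
        (√lam)⁻¹ / 2 * (poissonCentralMoment (2 * t + 2) 1 * lam ^ (t + 1)) =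
          (poissonCentralMoment (2 * t) 1 + poissonCentralMoment (2 * t + 2) 1) / 2 *
            √lam ^ (2 * t + 1) := by
      set x := √lam
      rw [← sq_sqrt hlam]
      field_simp
      ring
    calc _ ≤ _ := h
      _ ≤ _ := by gcongr
      _ = _ := hbal
      _ ≤ _ := mul_le_mul_of_nonneg_left (le_max_left _ _) (by positivity)

theorem exists_poissonE_abs_sub_pow_le {s : ℕ} (hs : 2 ≤ s) :
    ∃ C : ℝ, 0 < C ∧ ∀ lam : ℝ, 0 ≤ lam →
      poissonE lam (fun k => |(k : ℝ) - lam| ^ s) ≤ C * max (lam ^ ((s : ℝ) / 2)) lam := by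
  suffices ∃ B : ℝ, 0 ≤ B ∧ ∀ lam : ℝ, 0 ≤ lam →
      poissonE lam (fun k => |(k : ℝ) - lam| ^ s) ≤ B * max (√lam ^ s) lam by
    obtain ⟨B, hB, hbound⟩ := this
    refine ⟨B + 1, by linarith, fun lam hlam => ?_⟩
    rw [rpow_div_two_eq_sqrt _ hlam, rpow_natCast]
    exact (hbound lam hlam).trans
      (mul_le_mul_of_nonneg_right (by linarith) (le_max_of_le_left (by positivity)))
  obtain ⟨t, rfl | rfl⟩ := Nat.even_or_odd' s
  · exact ⟨_, poissonCentralMoment_nonneg _ zero_le_one, fun lam hlam =>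
      poissonE_abs_sub_pow_two_mul_le (by omega) hlam⟩
  · exact ⟨_, div_nonneg (add_nonneg (poissonCentralMoment_nonneg _ zero_le_one)
      (poissonCentralMoment_nonneg _ zero_le_one)) zero_le_two, fun lam hlam =>
      poissonE_abs_sub_pow_two_mul_add_one_le (by omega) hlam⟩

lemma natCast_div_sub_eq_inv_mul {n : ℕ} (hn : 0 < n) (k : ℕ) (p : ℝ) :
    (k : ℝ) / n - p = (n : ℝ)⁻¹ * (k - n * p) := by
  field_simp

/-- central moments of the Poisson empirical frequency `p̂ = X/n`,
`X ~ Poisson(np)`: exact polynomial expansion with controlled coefficients, and the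
resulting absolute central moment bound. -/
theorem poisson_central_moments (s : ℕ) (hs : 2 ≤ s) :
    ∃ h : ℕ → ℝ,
      (∀ n : ℕ, 0 < n → ∀ p : ℝ, 0 ≤ p →
        poissonE (n * p) (fun k => ((k : ℝ) / n - p) ^ s) =
          ((n : ℝ) ^ s)⁻¹ * ∑ j ∈ Finset.Icc 1 (s / 2), h j * ((n : ℝ) * p) ^ j) ∧
      (∀ j ∈ Finset.Icc 1 (s / 2),
        |h j| ≤ 2 ^ j * (j : ℝ) ^ s / (Nat.factorial j) ∧
        2 ^ j * (j : ℝ) ^ s / (Nat.factorial j) ≤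
          (2 * Real.exp (Real.exp 1 / (Real.exp 1 - 1))) ^ s * ((s : ℝ) / Real.log s) ^ s) ∧
      ∃ C : ℝ, 0 < C ∧
        ∀ n : ℕ, 0 < n → ∀ p : ℝ, 0 ≤ p →
          poissonE (n * p) (fun k => |(k : ℝ) / n - p| ^ s) ≤
            C * max (((n : ℝ) * p) ^ ((s : ℝ) / 2)) ((n : ℝ) * p) / (n : ℝ) ^ s := by
  obtain ⟨C, hC, habs⟩ := exists_poissonE_abs_sub_pow_le hs
  refine ⟨fun j => centralMomentCoeff s j, fun n hn p _ => ?_, fun j hj => ⟨?_, ?_⟩,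
    C, hC, fun n hn p hp => ?_⟩
  · conv_lhs => simp only [natCast_div_sub_eq_inv_mul hn, mul_pow, inv_pow]
    rw [poissonE_const_mul, poissonE, (hasSum_poissonPMF_mul_sub_pow _ s).tsum_eq,
      poissonCentralMoment_eq_sum_Icc (by omega)]
  · rw [abs_of_nonneg (by positivity), mul_div_assoc]
    exact (centralMomentCoeff_le_pow_div_factorial s j).trans
      (le_mul_of_one_le_left (by positivity) (one_le_pow₀ one_le_two))
  · exact two_pow_mul_pow_div_factorial_le hs ((mem_Icc.mp hj).2.trans (Nat.div_le_self s 2))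
  · simp_rw [natCast_div_sub_eq_inv_mul hn, abs_mul, mul_pow, abs_inv, Nat.abs_cast, inv_pow,
      poissonE_const_mul, ← div_eq_inv_mul]
    gcongr
    exact habs _ (by positivity)
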